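/- Let f be a discontinuous n-monomial and set A(h) = f(h)/h^n for h ≠ 0. If sup_{h ≠ 0} A(h) = +∞ and inf_{h ≠ 0} A(h) = -∞, then the closure of the graph of f is all of ℝ². -/

import Mathlib

noncomputable def fdiff (h : ℝ) (f : ℝ → ℝ) : ℝ → ℝ := fun x => f (x + h) - f x

def IsMonomial (n : ℕ) (f : ℝ → ℝ) : Prop :=
  ∀ x h : ℝ, (1 / (n.factorial : ℝ)) * ((fdiff h)^[n] f) x = f h

/-!
An `n`-monomial is rationally homogeneous, `f (r * h) = r ^ n * f h`, so each level set of
`A h = f h / h ^ n` is stable under `h ↦ r * h` with `r ∈ ℚˣ` and is therefore dense as soon as it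
is nonempty. Since `Δ_d^[n + 1] f = 0`, Newton's forward-difference formula shows that
`t ↦ f (u + t * d)` agrees on `ℚ` with a polynomial, whose graph over the line through `u` then
lies in the closure of the graph of `f`. Near any `x₀` there are points `u`, `v` of one sign,
bounded away from `0`, with `A u` very large and `A v` very negative, so `y₀` lies between `f u`
and `f v`; the intermediate value theorem for that polynomial along `[u, v]` produces a point
`(x, y₀)` of the closure with `x` close to `x₀`.
-/

open Finset Function Polynomial

section fwdDiff

variable {M G : Type*} [AddCommGroup M] [AddCommGroup G]

theorem fwdDiff_nsmul_eq_sum (h : M) (g : M → G) (m : ℕ) :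
    fwdDiff (m • h) g = ∑ i ∈ range m, fun y ↦ fwdDiff h g (y + i • h) := by
  ext y
  have := Finset.sum_range_sub (fun i ↦ g (y + i • h)) m
  simp only [succ_nsmul, ← add_assoc, zero_smul, add_zero] at this
  simpa only [Finset.sum_apply, fwdDiff] using this.symm

theorem fwdDiff_nsmul_iterate_eq_of_forall_eq (h : M) (m n : ℕ) {g : M → G} {c : G}
    (hg : ∀ x, (fwdDiff h)^[n] g x = c) (x : M) : (fwdDiff (m • h))^[n] g x = m ^ n • c := by
  induction n generalizing g x with
  | zero => simpa using hg x
  | succ k ih =>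
    have hshift (i : ℕ) (y : M) : (fwdDiff h)^[k] (fun y ↦ fwdDiff h g (y + i • h)) y = c := by
      rw [fwdDiff_iter_comp_add, ← iterate_succ_apply, hg]
    rw [iterate_succ_apply, fwdDiff_nsmul_eq_sum, fwdDiff_iter_finsetSum, Finset.sum_apply,
      Finset.sum_congr rfl fun i _ ↦ ih (hshift i) x, sum_const, card_range, smul_smul, pow_succ']

theorem fwdDiff_neg_iterate (h : M) (g : M → G) (m : ℕ) (x : M) :
    (fwdDiff (-h))^[m] g x = (-1 : ℤ) ^ m • (fwdDiff h)^[m] g (x - m • h) := by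
  induction m generalizing x with
  | zero => simp
  | succ k ih =>
    rw [iterate_succ_apply', fwdDiff, ih, ih, iterate_succ_apply', fwdDiff,
      show x - (k + 1) • h + h = x - k • h by rw [succ_nsmul]; abel,
      show x + -h - k • h = x - (k + 1) • h by rw [succ_nsmul]; abel,
      pow_succ, mul_neg_one, neg_smul, smul_sub, neg_sub]

end fwdDiff

theorem Polynomial.eq_of_eval_natCast_eq {R : Type*} [CommRing R] [IsDomain R] [CharZero R]
    {P Q : R[X]} (h : ∀ m : ℕ, P.eval (m : R) = Q.eval (m : R)) : P = Q :=
  eq_of_infinite_eval_eq P Q <| (Set.infinite_range_of_injective Nat.cast_injective).mono <| by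
    rintro _ ⟨m, rfl⟩
    exact h m

theorem mem_uIcc_mul_of_lt {y M a c p q : ℝ} (ha : M < a) (hc : c < -M) (hpq : 0 < p * q)
    (hp : |y| ≤ M * |p|) (hq : |y| ≤ M * |q|) : y ∈ Set.uIcc (a * p) (c * q) := by
  have hy := abs_le.1 (le_refl |y|)
  rcases lt_or_gt_of_ne (left_ne_zero_of_mul hpq.ne') with hp0 | hp0
  · have hq0 : q < 0 := neg_of_mul_pos_right hpq hp0.le
    rw [abs_of_neg hp0] at hp
    rw [abs_of_neg hq0] at hq
    exact Set.mem_uIcc.2 (Or.inl ⟨by nlinarith, by nlinarith⟩)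
  · have hq0 : 0 < q := pos_of_mul_pos_right hpq hp0.le
    rw [abs_of_pos hp0] at hp
    rw [abs_of_pos hq0] at hq
    exact Set.mem_uIcc.2 (Or.inr ⟨by nlinarith, by nlinarith⟩)

theorem mem_closure_graph_of_eval_ratCast {g : ℝ → ℝ} {P : ℝ[X]} {u d : ℝ}
    (hP : ∀ t : ℚ, P.eval (t : ℝ) = g (u + t * d)) (t : ℝ) :
    (u + t * d, P.eval t) ∈ closure {p : ℝ × ℝ | p.2 = g p.1} := by
  have hcont : Continuous fun s : ℝ ↦ (u + s * d, P.eval s) := by fun_prop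
  refine closure_mono ?_ (hcont.range_subset_closure_image_dense Rat.denseRange_cast ⟨t, rfl⟩)
  rintro _ ⟨_, ⟨r, rfl⟩, rfl⟩
  exact hP r

theorem abs_pow_ge_and_mul_pos_of_abs_sub_lt {x x₁ : ℝ} (hx₁ : x₁ ≠ 0)
    (hx : |x - x₁| < |x₁| / 2) (n : ℕ) : (|x₁| / 2) ^ n ≤ |x ^ n| ∧ 0 < x * x₁ := by
  have hx₁' : 0 < |x₁| := abs_pos.2 hx₁
  have hlow : |x₁| / 2 ≤ |x| := by linarith [abs_sub_abs_le_abs_sub x₁ x, abs_sub_comm x x₁]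
  refine ⟨abs_pow x n ▸ pow_le_pow_left₀ (by positivity) hlow n, ?_⟩
  have h1 : -((x - x₁) * x₁) ≤ |x - x₁| * |x₁| := abs_mul (x - x₁) x₁ ▸ neg_le_abs _
  nlinarith [abs_mul_abs_self x₁]

/-- `descPochhammer ℝ j / j!` is the binomial polynomial `X.choose j`, so this is Newton's
forward-difference interpolant of `g` at the nodes `u + k * d`, `k ∈ ℕ`. -/
noncomputable def newtonPolynomial (g : ℝ → ℝ) (n : ℕ) (u d : ℝ) : ℝ[X] :=
  ∑ j ∈ range (n + 1), C ((fwdDiff d)^[j] g u / j.factorial) * descPochhammer ℝ j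

namespace IsMonomial

variable {n : ℕ} {f : ℝ → ℝ}

theorem fwdDiff_iterate (hf : IsMonomial n f) (x h : ℝ) :
    (fwdDiff h)^[n] f x = n.factorial * f h := by
  rw [← hf x h, ← mul_assoc, mul_one_div_cancel (by positivity), one_mul]
  rfl

theorem fwdDiff_iterate_of_lt (hf : IsMonomial n f) {j : ℕ} (hj : n < j) (x h : ℝ) :
    (fwdDiff h)^[j] f x = 0 := by
  obtain ⟨m, rfl⟩ := Nat.exists_eq_add_of_lt hj
  have hzero : (fwdDiff h)^[n + 1] f = 0 := by
    ext y
    rw [iterate_succ_apply', fwdDiff, hf.fwdDiff_iterate, hf.fwdDiff_iterate, sub_self,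
      Pi.zero_apply]
  rw [add_right_comm, add_comm, iterate_add_apply, hzero, fwdDiff_iter_eq_sum_shift]
  simp

theorem map_natCast_mul (hf : IsMonomial n f) (m : ℕ) (h : ℝ) : f (m * h) = m ^ n * f h := by
  have key := fwdDiff_nsmul_iterate_eq_of_forall_eq h m n (hf.fwdDiff_iterate · h) 0
  rw [nsmul_eq_mul, hf.fwdDiff_iterate, nsmul_eq_mul, Nat.cast_pow, mul_left_comm] at key
  exact mul_left_cancel₀ (by positivity) key

theorem map_neg (hf : IsMonomial n f) (h : ℝ) : f (-h) = (-1) ^ n * f h := by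
  have key := fwdDiff_neg_iterate h f n 0
  rw [hf.fwdDiff_iterate, hf.fwdDiff_iterate, zsmul_eq_mul, Int.cast_pow, Int.cast_neg,
    Int.cast_one, mul_left_comm] at key
  exact mul_left_cancel₀ (by positivity) key

theorem map_intCast_mul (hf : IsMonomial n f) (k : ℤ) (h : ℝ) : f (k * h) = k ^ n * f h := by
  obtain ⟨m, rfl | rfl⟩ := k.eq_nat_or_neg
  · simpa using hf.map_natCast_mul m h
  · rw [Int.cast_neg, Int.cast_natCast, neg_mul, hf.map_neg, hf.map_natCast_mul, neg_pow]
    ring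

theorem map_ratCast_mul (hf : IsMonomial n f) (r : ℚ) (h : ℝ) : f (r * h) = r ^ n * f h := by
  have key := hf.map_natCast_mul r.den (r * h)
  rw [← mul_assoc, ← Rat.cast_natCast, ← Rat.cast_mul, Rat.den_mul_eq_num, Rat.cast_intCast,
    hf.map_intCast_mul, Rat.cast_natCast] at key
  rw [show (r : ℝ) ^ n = r.num ^ n / r.den ^ n by rw [Rat.cast_def, div_pow],
    div_mul_eq_mul_div, key]
  field_simp

theorem div_pow_ratCast_mul (hf : IsMonomial n f) {r : ℚ} (hr : r ≠ 0) (h : ℝ) :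
    f (r * h) / (r * h) ^ n = f h / h ^ n := by
  rw [hf.map_ratCast_mul, mul_pow, mul_div_mul_left _ _ (by positivity)]

theorem map_add_natCast_mul (hf : IsMonomial n f) (u d : ℝ) (k : ℕ) :
    f (u + k * d) = ∑ j ∈ range (n + 1), (k.choose j : ℝ) * (fwdDiff d)^[j] f u := by
  have hk : ∀ j ∈ range (k + n + 1), j ∉ range (k + 1) →
      (k.choose j : ℝ) * (fwdDiff d)^[j] f u = 0 := fun j _ hj ↦ by
    rw [Nat.choose_eq_zero_of_lt (by simpa using hj), Nat.cast_zero, zero_mul]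
  have hn : ∀ j ∈ range (k + n + 1), j ∉ range (n + 1) →
      (k.choose j : ℝ) * (fwdDiff d)^[j] f u = 0 := fun j _ hj ↦ by
    rw [hf.fwdDiff_iterate_of_lt (by simpa using hj), mul_zero]
  rw [← nsmul_eq_mul, shift_eq_sum_fwdDiff_iter d f k u]
  simp_rw [nsmul_eq_mul]
  rw [sum_subset (range_subset_range.2 (by omega)) hk,
    ← sum_subset (range_subset_range.2 (by omega)) hn]

theorem eval_newtonPolynomial_natCast (hf : IsMonomial n f) (u d : ℝ) (k : ℕ) :
    (newtonPolynomial f n u d).eval (k : ℝ) = f (u + k * d) := by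
  rw [hf.map_add_natCast_mul, newtonPolynomial, eval_finsetSum]
  refine sum_congr rfl fun j _ ↦ ?_
  rw [eval_mul, eval_C, descPochhammer_eval_eq_descFactorial,
    Nat.descFactorial_eq_factorial_mul_choose, Nat.cast_mul]
  field_simp

theorem eval_newtonPolynomial_natCast_div (hf : IsMonomial n f) (u d : ℝ) (k : ℕ) {q : ℕ}
    (hq : q ≠ 0) : (newtonPolynomial f n u d).eval (k / q : ℝ) = f (u + k / q * d) := by
  have hq' : (q : ℝ) ≠ 0 := by exact_mod_cast hq
  have hcomp : (newtonPolynomial f n u (d / q)).comp (C (q : ℝ) * X) =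
      newtonPolynomial f n u d := Polynomial.eq_of_eval_natCast_eq fun m ↦ by
    rw [eval_comp, eval_mul, eval_C, eval_X, ← Nat.cast_mul, hf.eval_newtonPolynomial_natCast,
      hf.eval_newtonPolynomial_natCast, Nat.cast_mul]
    field_simp
  rw [← hcomp, eval_comp, eval_mul, eval_C, eval_X, mul_div_cancel₀ _ hq',
    hf.eval_newtonPolynomial_natCast]
  field_simp

theorem eval_newtonPolynomial_ratCast_of_nonneg (hf : IsMonomial n f) (u d : ℝ) {t : ℚ}
    (ht : 0 ≤ t) : (newtonPolynomial f n u d).eval (t : ℝ) = f (u + t * d) := by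
  have hnum : ((t.num.toNat : ℕ) : ℝ) = t.num := by
    exact_mod_cast Int.toNat_of_nonneg (Rat.num_nonneg.2 ht)
  have := hf.eval_newtonPolynomial_natCast_div u d t.num.toNat t.den_nz
  rwa [hnum, ← Rat.cast_def] at this

theorem eval_newtonPolynomial_ratCast (hf : IsMonomial n f) (u d : ℝ) (t : ℚ) :
    (newtonPolynomial f n u d).eval (t : ℝ) = f (u + t * d) := by
  obtain ⟨N, hN⟩ := exists_nat_ge (-t)
  have hshift : (newtonPolynomial f n (u - N * d) d).comp (X + C (N : ℝ)) =
      newtonPolynomial f n u d := Polynomial.eq_of_eval_natCast_eq fun m ↦ by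
    rw [eval_comp, eval_add, eval_X, eval_C, ← Nat.cast_add, hf.eval_newtonPolynomial_natCast,
      hf.eval_newtonPolynomial_natCast, Nat.cast_add]
    ring_nf
  rw [← hshift, eval_comp, eval_add, eval_X, eval_C, ← Rat.cast_natCast, ← Rat.cast_add,
    hf.eval_newtonPolynomial_ratCast_of_nonneg _ _ (by linarith)]
  push_cast
  ring_nf

theorem dense_setOf_div_pow_eq (hf : IsMonomial n f) {h : ℝ} (hh : h ≠ 0) :
    Dense {x : ℝ | x ≠ 0 ∧ f x / x ^ n = f h / h ^ n} := by
  refine (mul_right_surjective₀ hh).denseRange.dense_of_mapsTo (continuous_mul_const h)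
    (Rat.denseRange_cast.sdiff_singleton 0) ?_
  rintro _ ⟨⟨r, rfl⟩, hr⟩
  have hr : r ≠ 0 := by simpa using hr
  exact ⟨mul_ne_zero (Rat.cast_ne_zero.2 hr) hh, hf.div_pow_ratCast_mul hr h⟩

theorem exists_mem_ball_mem_uIcc (hf : IsMonomial n f)
    (hsup : ∀ M : ℝ, ∃ h : ℝ, h ≠ 0 ∧ M < f h / h ^ n)
    (hinf : ∀ M : ℝ, ∃ h : ℝ, h ≠ 0 ∧ f h / h ^ n < M) (x₀ y : ℝ) {ε : ℝ} (hε : 0 < ε) :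
    ∃ u ∈ Metric.ball x₀ ε, ∃ v ∈ Metric.ball x₀ ε, y ∈ Set.uIcc (f u) (f v) := by
  obtain ⟨x₁, hx₁0 : x₁ ≠ 0, hx₁⟩ := (dense_compl_singleton (0 : ℝ)).exists_mem_open
    Metric.isOpen_ball ⟨x₀, Metric.mem_ball_self (half_pos hε)⟩
  set ρ := min (ε / 2) (|x₁| / 2)
  have hρ : 0 < ρ := lt_min (half_pos hε) (half_pos (abs_pos.2 hx₁0))
  have hball (x : ℝ) (hx : x ∈ Metric.ball x₁ ρ) : x ∈ Metric.ball x₀ ε := by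
    have := Metric.mem_ball.1 hx₁
    have := (Metric.mem_ball.1 hx).trans_le (min_le_left _ _)
    exact Metric.mem_ball.2 (by linarith [dist_triangle x x₁ x₀])
  have hnear (x : ℝ) (hx : x ∈ Metric.ball x₁ ρ) :=
    abs_pow_ge_and_mul_pos_of_abs_sub_lt hx₁0 ((Metric.mem_ball.1 hx).trans_le (min_le_right _ _)) n
  have hexists {p : ℝ → Prop} (hp : ∃ h, h ≠ 0 ∧ p (f h / h ^ n)) :
      ∃ x ∈ Metric.ball x₁ ρ, x ≠ 0 ∧ p (f x / x ^ n) := by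
    obtain ⟨h, hh, hph⟩ := hp
    obtain ⟨x, ⟨hx0, hxh⟩, hx⟩ := (hf.dense_setOf_div_pow_eq hh).exists_mem_open Metric.isOpen_ball
      ⟨x₁, Metric.mem_ball_self hρ⟩
    exact ⟨x, hx, hx0, hxh ▸ hph⟩
  set M := |y| / (|x₁| / 2) ^ n
  have hM : |y| = M * (|x₁| / 2) ^ n := by
    rw [div_mul_cancel₀ _ (by positivity)]
  obtain ⟨u, hu, hu0, hMu⟩ := hexists (p := (M < ·)) (hsup M)
  obtain ⟨v, hv, hv0, hMv⟩ := hexists (p := (· < -M)) (hinf (-M))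
  refine ⟨u, hball u hu, v, hball v hv, ?_⟩
  rw [← div_mul_cancel₀ (f u) (pow_ne_zero n hu0), ← div_mul_cancel₀ (f v) (pow_ne_zero n hv0)]
  refine mem_uIcc_mul_of_lt hMu hMv ?_ (hM ▸ by gcongr; exact (hnear u hu).1)
    (hM ▸ by gcongr; exact (hnear v hv).1)
  rw [← mul_pow]
  refine pow_pos (pos_of_mul_pos_left ?_ (sq_nonneg x₁)) n
  nlinarith [(hnear u hu).2, (hnear v hv).2]

end IsMonomial

theorem stmt13_general (n : ℕ) (f : ℝ → ℝ) (hf : IsMonomial n f)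
    (hsup : ∀ M : ℝ, ∃ h : ℝ, h ≠ 0 ∧ M < f h / h ^ n)
    (hinf : ∀ M : ℝ, ∃ h : ℝ, h ≠ 0 ∧ f h / h ^ n < M) :
    closure {p : ℝ × ℝ | p.2 = f p.1} = Set.univ := by
  refine Set.eq_univ_of_forall fun ⟨x₀, y₀⟩ ↦ ?_
  rw [← closure_closure, Metric.mem_closure_iff]
  intro ε hε
  obtain ⟨u, hu, v, hv, hy⟩ := hf.exists_mem_ball_mem_uIcc hsup hinf x₀ y₀ hε
  set P := newtonPolynomial f n u (v - u)
  have hP := hf.eval_newtonPolynomial_ratCast u (v - u)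
  have hP0 : P.eval 0 = f u := by simpa using hP 0
  have hP1 : P.eval 1 = f v := by simpa using hP 1
  obtain ⟨t, ht, hPt⟩ := intermediate_value_uIcc P.continuous.continuousOn (hP0 ▸ hP1 ▸ hy)
  refine ⟨(u + t * (v - u), y₀), hPt ▸ mem_closure_graph_of_eval_ratCast hP t, ?_⟩
  have hx := (convex_ball x₀ ε).add_smul_sub_mem hu hv (Set.uIcc_of_le (zero_le_one' ℝ) ▸ ht)
  rwa [Prod.dist_eq, dist_self, max_eq_left dist_nonneg, dist_comm, ← smul_eq_mul]

theorem stmt13 (n : ℕ) (f : ℝ → ℝ) (hf : IsMonomial n f) (hdisc : ¬ Continuous f)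
    (hsup : ∀ M : ℝ, ∃ h : ℝ, h ≠ 0 ∧ M < f h / h ^ n)
    (hinf : ∀ M : ℝ, ∃ h : ℝ, h ≠ 0 ∧ f h / h ^ n < M) :
    closure {p : ℝ × ℝ | p.2 = f p.1} = Set.univ :=
  stmt13_general n f hf hsup hinf
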